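/- Let (E,F) be a uniformly self-similar ends space. Then there exist a half-space H of (E,F), an involution τ ∈ Homeo(E,F), and an element g ∈ Homeo(E,F) such that φ = (g τ g⁻¹) τ is an H-translation, i.e., the sets φⁿ(H), n ∈ ℤ, are pairwise disjoint. In particular, there is an H-translation that is a product of two conjugates of a single involution. -/

import Mathlib

section EndsSpace

variable {E : Type*} [TopologicalSpace E]

/-- A homeomorphism of pairs from `(A, A ∩ F)` to `(B, B ∩ F)`:
a homeomorphism of the subspaces `A → B` carrying `A ∩ F` onto `B ∩ F`. -/
def PairHomeo (F A B : Set E) : Prop :=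
  ∃ h : A ≃ₜ B, ∀ x : A, ((h x : E) ∈ F ↔ (x : E) ∈ F)

/-- `(E, F)` is self-similar: every partition of `E` into finitely many pairwise
disjoint nonempty clopen sets has a piece containing a clopen set `D` with
`(D, D ∩ F)` homeomorphic (as a pair) to `(E, F)`. -/
def SelfSimilarPair (F : Set E) : Prop :=
  ∀ (n : ℕ) (P : Fin n → Set E),
    (∀ i, IsClopen (P i)) → (∀ i, (P i).Nonempty) →
    Pairwise (Function.onFun Disjoint P) → (⋃ i, P i) = Set.univ →
    ∃ i, ∃ D : Set E, IsClopen D ∧ D ⊆ P i ∧ PairHomeo F D Set.univ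

/-- The preorder `x ≼ y` on ends: every clopen neighborhood `U` of `y` contains a
clopen set `D` for which there are a clopen neighborhood `V` of `x` and a
homeomorphism of pairs `(V, V ∩ F) → (D, D ∩ F)`. -/
def EndsLE (F : Set E) (x y : E) : Prop :=
  ∀ U : Set E, IsClopen U → y ∈ U →
    ∃ D : Set E, D ⊆ U ∧ IsClopen D ∧
      ∃ V : Set E, IsClopen V ∧ x ∈ V ∧ PairHomeo F V D

/-- The equivalence `x ∼ y`: `x ≼ y` and `y ≼ x`. -/
def EndsEquiv (F : Set E) (x y : E) : Prop := EndsLE F x y ∧ EndsLE F y x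

/-- `x` is a maximal end. -/
def MaximalEnd (F : Set E) (x : E) : Prop := ∀ y, EndsLE F x y → EndsLE F y x

/-- `M(E)`, the set of maximal ends. -/
def MaxSet (F : Set E) : Set E := {x | MaximalEnd F x}

/-- `(E, F)` is uniformly self-similar: it is self-similar, `M(E)` is a single
`∼`-equivalence class, and `M(E)` is homeomorphic to the Cantor space `ℕ → Bool`. -/
def UniformlySelfSimilar (F : Set E) : Prop :=
  SelfSimilarPair F ∧
  (∃ x, MaxSet F = {y | EndsEquiv F x y}) ∧
  Nonempty (↥(MaxSet F) ≃ₜ (ℕ → Bool))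

/-- The group `Homeo(E,F)` of homeomorphisms of `E` preserving `F`,
as a subgroup of the permutation group of `E`. -/
def EndsHomeo (F : Set E) : Subgroup (Equiv.Perm E) where
  carrier := {h | Continuous h ∧ Continuous h.symm ∧ ∀ x, h x ∈ F ↔ x ∈ F}
  one_mem' := ⟨continuous_id, continuous_id, fun _ => Iff.rfl⟩
  mul_mem' := by
    rintro a b ⟨ha1, ha2, ha3⟩ ⟨hb1, hb2, hb3⟩
    refine ⟨?_, ?_, fun x => ?_⟩
    · exact ha1.comp hb1
    · exact hb2.comp ha2
    · exact (ha3 (b x)).trans (hb3 x)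
  inv_mem' := by
    rintro a ⟨ha1, ha2, ha3⟩
    refine ⟨ha2, ha1, fun x => ?_⟩
    have h := ha3 (a⁻¹ x)
    rw [show a (a⁻¹ x) = x from (Equiv.eq_symm_apply a).mp rfl] at h
    exact h.symm

/-- A half-space of `(E,F)`: a clopen set meeting `M(E)` in a nonempty proper subset. -/
def IsHalfSpace (F H : Set E) : Prop :=
  IsClopen H ∧ (H ∩ MaxSet F).Nonempty ∧ H ∩ MaxSet F ⊂ MaxSet F

/-- `φ` is an `H`-translation: the sets `φⁿ(H)`, `n ∈ ℤ`, are pairwise disjoint. -/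
def IsHTranslation (H : Set E) (φ : Equiv.Perm E) : Prop :=
  ∀ m n : ℤ, m ≠ n → Disjoint ((φ ^ m) '' H) ((φ ^ n) '' H)

/-- A homeomorphism is supported on `H` if it fixes every point outside `H`. -/
def SupportedOn (H : Set E) (h : Equiv.Perm E) : Prop := ∀ x ∉ H, h x = x

end EndsSpace

/-!
Self-similarity, applied to a fine clopen partition, gives a point `x` every neighbourhood of which
contains a copy of `(E, F)`. Such a point is maximal, and since the maximal ends form one class,
every maximal end has the same property; two distinct maximal ends therefore give two disjoint
copies inside every copy, so copies missing `x` exist arbitrarily close to `x`. This yields pairwise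
disjoint copies `B n`, `n ∈ ℤ`, accumulating only at `x`.

A permutation `σ` of `ℤ` then acts on `E` by carrying `B n` onto `B (σ n)` along the copy
identifications and fixing everything else; this is a homomorphism `Perm ℤ →* Homeo(E, F)`, the
accumulation at `x` being what makes the glued maps continuous. Let `τ` and `g` be the images of
`n ↦ -n` and `n ↦ n + 1`: then `g τ g⁻¹ τ` is the image of `n ↦ n + 2`, which moves `B 0` through
the disjoint blocks `B (2m)`, and `B 0` is a half-space because every copy contains maximal ends.
-/

open Set Filter Topology Function

section PairEmbedding

variable {E : Type*} [TopologicalSpace E] {F : Set E}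

/-- A pointwise form of `PairHomeo F V (f '' V)` that restricts and composes freely. -/
structure IsPairEmbeddingOn (F : Set E) (f : E → E) (V : Set E) : Prop where
  continuousOn : ContinuousOn f V
  injOn : InjOn f V
  mem_iff : ∀ x ∈ V, f x ∈ F ↔ x ∈ F

theorem PairHomeo.symm {A B : Set E} (h : PairHomeo F A B) : PairHomeo F B A := by
  obtain ⟨h, hF⟩ := h
  exact ⟨h.symm, fun y => by simpa using (hF (h.symm y)).symm⟩

theorem PairHomeo.exists_isPairEmbeddingOn {V D : Set E} (h : PairHomeo F V D) :
    ∃ f, IsPairEmbeddingOn F f V ∧ f '' V = D := by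
  classical
  obtain ⟨h, hF⟩ := h
  set f : E → E := fun x => if hx : x ∈ V then h ⟨x, hx⟩ else x
  have hf : V.domRestrict f = Subtype.val ∘ h := funext fun x => dif_pos x.2
  refine ⟨f, ⟨?_, ?_, fun x hx => ?_⟩, ?_⟩
  · rw [continuousOn_iff_continuous_domRestrict]
    exact hf ▸ continuous_subtype_val.comp h.continuous
  · rw [injOn_iff_injective, hf]
    exact Subtype.val_injective.comp h.injective
  · simpa [f, hx] using hF ⟨x, hx⟩
  · rw [← range_domRestrict, hf, range_comp, h.surjective.range_eq, image_univ, Subtype.range_coe]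

namespace IsPairEmbeddingOn

variable {f g : E → E} {V W : Set E}

theorem mono (hf : IsPairEmbeddingOn F f V) (hWV : W ⊆ V) : IsPairEmbeddingOn F f W :=
  ⟨hf.continuousOn.mono hWV, hf.injOn.mono hWV, fun x hx => hf.mem_iff x (hWV hx)⟩

theorem comp (hg : IsPairEmbeddingOn F g W) (hf : IsPairEmbeddingOn F f V) (hfVW : MapsTo f V W) :
    IsPairEmbeddingOn F (g ∘ f) V :=
  ⟨hg.continuousOn.comp hf.continuousOn hfVW, hg.injOn.comp hf.injOn hfVW,
    fun x hx => (hg.mem_iff _ (hfVW hx)).trans (hf.mem_iff x hx)⟩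

variable [CompactSpace E] [T2Space E]

theorem pairHomeo (hf : IsPairEmbeddingOn F f V) (hV : IsClosed V) : PairHomeo F V (f '' V) := by
  have : CompactSpace V := isCompact_iff_compactSpace.1 hV.isCompact
  let e : V ≃ f '' V := hf.injOn.bijOn_image.equiv f
  have he : Continuous e := hf.continuousOn.mapsToRestrict (mapsTo_image f V)
  exact ⟨he.homeoOfEquivCompactToT2, fun x => hf.mem_iff x x.2⟩

theorem isClosed_image (hf : IsPairEmbeddingOn F f V) (hV : IsClosed V) : IsClosed (f '' V) :=
  (hV.isCompact.image_of_continuousOn hf.continuousOn).isClosed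

theorem isOpen_image (hf : IsPairEmbeddingOn F f V) (hV : IsClosed V) (hfV : IsOpen (f '' V))
    {S : Set E} (hS : IsOpen S) (hSV : S ⊆ V) : IsOpen (f '' S) := by
  rw [← sdiff_sdiff_cancel_left hSV, hf.injOn.image_sdiff_subset sdiff_subset]
  exact hfV.sdiff ((hf.mono sdiff_subset).isClosed_image (hV.sdiff hS))

theorem isClopen_image (hf : IsPairEmbeddingOn F f V) (hV : IsClosed V) (hfV : IsOpen (f '' V))
    {S : Set E} (hS : IsClopen S) (hSV : S ⊆ V) : IsClopen (f '' S) :=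
  ⟨(hf.mono hSV).isClosed_image hS.1, hf.isOpen_image hV hfV hS.2 hSV⟩

end IsPairEmbeddingOn

end PairEmbedding

section CopyEmbedding

variable {E : Type*} [TopologicalSpace E] {F : Set E}

/-- `j` parametrises a copy `range j` of `(E, F)` inside `E`. -/
structure IsCopyEmbedding (F : Set E) (j : E → E) : Prop where
  isOpenEmbedding : IsOpenEmbedding j
  mem_iff : ∀ x, j x ∈ F ↔ x ∈ F

namespace IsCopyEmbedding

variable {j k : E → E}

theorem comp (hj : IsCopyEmbedding F j) (hk : IsCopyEmbedding F k) : IsCopyEmbedding F (j ∘ k) :=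
  ⟨hj.isOpenEmbedding.comp hk.isOpenEmbedding, fun x => (hj.mem_iff (k x)).trans (hk.mem_iff x)⟩

theorem isPairEmbeddingOn (hj : IsCopyEmbedding F j) (V : Set E) : IsPairEmbeddingOn F j V :=
  ⟨hj.isOpenEmbedding.continuous.continuousOn, hj.isOpenEmbedding.injective.injOn,
    fun x _ => hj.mem_iff x⟩

variable [CompactSpace E] [T2Space E]

theorem isClopen_image (hj : IsCopyEmbedding F j) {V : Set E} (hV : IsClopen V) :
    IsClopen (j '' V) :=
  ⟨(hj.isPairEmbeddingOn V).isClosed_image hV.1, hj.isOpenEmbedding.isOpenMap _ hV.2⟩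

theorem isClopen_range (hj : IsCopyEmbedding F j) : IsClopen (range j) :=
  image_univ (f := j) ▸ hj.isClopen_image isClopen_univ

end IsCopyEmbedding

variable [CompactSpace E] [T2Space E] {f j : E → E} {V : Set E}

theorem IsPairEmbeddingOn.isCopyEmbedding (hf : IsPairEmbeddingOn F f univ)
    (hrange : IsOpen (range f)) : IsCopyEmbedding F f :=
  ⟨⟨((continuousOn_univ.1 hf.continuousOn).isClosedEmbedding
    (injOn_univ.1 hf.injOn)).isEmbedding, hrange⟩, fun x => hf.mem_iff x trivial⟩

theorem IsPairEmbeddingOn.isCopyEmbedding_comp (hf : IsPairEmbeddingOn F f V) (hV : IsClosed V)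
    (hfV : IsOpen (f '' V)) (hj : IsCopyEmbedding F j) (hjV : range j ⊆ V) :
    IsCopyEmbedding F (f ∘ j) := by
  refine (hf.comp (hj.isPairEmbeddingOn univ) fun x _ => hjV (mem_range_self x)).isCopyEmbedding ?_
  rw [range_comp]
  exact hf.isOpen_image hV hfV hj.isClopen_range.2 hjV

theorem PairHomeo.exists_isCopyEmbedding {D : Set E} (h : PairHomeo F D univ) (hD : IsOpen D) :
    ∃ j, IsCopyEmbedding F j ∧ range j = D := by
  obtain ⟨f, hf, hfD⟩ := h.symm.exists_isPairEmbeddingOn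
  rw [image_univ] at hfD
  exact ⟨f, hf.isCopyEmbedding (hfD ▸ hD), hfD⟩

theorem EndsLE.trans {x y z : E} (hxy : EndsLE F x y) (hyz : EndsLE F y z) : EndsLE F x z := by
  intro U hU hzU
  obtain ⟨D, hDU, hD, V, hV, hyV, hVD⟩ := hyz U hU hzU
  obtain ⟨D', hD'V, hD', V', hV', hxV', hV'D'⟩ := hxy V hV hyV
  obtain ⟨f, hf, rfl⟩ := hVD.exists_isPairEmbeddingOn
  obtain ⟨f', hf', rfl⟩ := hV'D'.exists_isPairEmbeddingOn
  refine ⟨f '' (f' '' V'), (image_mono hD'V).trans hDU, hf.isClopen_image hV.1 hD.2 hD' hD'V,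
    V', hV', hxV', ?_⟩
  rw [← image_comp]
  exact (hf.comp hf' (mapsTo_iff_image_subset.2 hD'V)).pairHomeo hV'.1

namespace IsCopyEmbedding

theorem endsLE_apply (hj : IsCopyEmbedding F j) (z : E) : EndsLE F z (j z) := by
  intro U hU hzU
  have hV : IsClopen (j ⁻¹' U) := hU.preimage hj.isOpenEmbedding.continuous
  exact ⟨j '' (j ⁻¹' U), image_preimage_subset j U, hj.isClopen_image hV, j ⁻¹' U, hV, hzU,
    (hj.isPairEmbeddingOn _).pairHomeo hV.1⟩

theorem maximalEnd_apply (hj : IsCopyEmbedding F j) {z : E} (hz : MaximalEnd F z) :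
    MaximalEnd F (j z) := fun w hw =>
  (hz w ((hj.endsLE_apply z).trans hw)).trans (hj.endsLE_apply z)

end IsCopyEmbedding

end CopyEmbedding

section SelfSimilarity

variable {E : Type*} [TopologicalSpace E] {F : Set E}

def CopiesNear (F : Set E) (x : E) : Prop :=
  ∀ U ∈ 𝓝 x, ∃ j, IsCopyEmbedding F j ∧ range j ⊆ U

variable [CompactSpace E] [T2Space E]

theorem SelfSimilarPair.exists_copiesNear [TotallyDisconnectedSpace E] (hss : SelfSimilarPair F) :
    ∃ x, CopiesNear F x := by
  by_contra! h
  simp only [CopiesNear, not_forall, not_exists, not_and] at h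
  choose U hU hUcopy using h
  have hcover : TopologicalSpace.IsOpenCover
      fun x => (⟨interior (U x), isOpen_interior⟩ : TopologicalSpace.Opens E) :=
    .of_sets (fun x => isOpen_interior)
      (eq_univ_of_forall fun x => mem_iUnion.2 ⟨x, mem_interior_iff_mem_nhds.2 (hU x)⟩)
  obtain ⟨n, W, hW, hWcover, hWdisj⟩ := hcover.exists_finite_nonempty_disjoint_clopen_cover
  have hWne (i : Fin n) : (W i : Set E).Nonempty := by
    rw [nonempty_iff_ne_empty, Ne, ← TopologicalSpace.Clopens.coe_bot, SetLike.coe_set_eq]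
    exact (hW i).1
  obtain ⟨i, D, hD, hDW, hDE⟩ := hss n (fun i => W i) (fun i => (W i).isClopen) hWne
    (fun i k hik => TopologicalSpace.Clopens.coe_disjoint.2 (hWdisj hik))
    (univ_subset_iff.1 hWcover)
  obtain ⟨x, hWx⟩ := (hW i).2
  obtain ⟨j, hj, rfl⟩ := hDE.exists_isCopyEmbedding hD.2
  exact hUcopy x j hj (hDW.trans (hWx.trans interior_subset))

namespace CopiesNear

variable {x y z : E}

theorem endsLE (hx : CopiesNear F x) (y : E) : EndsLE F y x := by
  intro U hU hxU
  obtain ⟨j, hj, hjU⟩ := hx U (hU.2.mem_nhds hxU)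
  refine ⟨range j, hjU, hj.isClopen_range, univ, isClopen_univ, mem_univ y, ?_⟩
  simpa only [image_univ] using (hj.isPairEmbeddingOn univ).pairHomeo isClosed_univ

theorem of_endsLE [TotallyDisconnectedSpace E] (hy : CopiesNear F y) (hyz : EndsLE F y z) :
    CopiesNear F z := by
  intro U hU
  obtain ⟨U', ⟨hzU', hU'⟩, hU'U⟩ := (nhds_basis_clopen z).mem_iff.1 hU
  obtain ⟨D, hDU', hD, V, hV, hyV, hVD⟩ := hyz U' hU' hzU'
  obtain ⟨j, hj, hjV⟩ := hy V (hV.2.mem_nhds hyV)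
  obtain ⟨f, hf, rfl⟩ := hVD.exists_isPairEmbeddingOn
  refine ⟨f ∘ j, hf.isCopyEmbedding_comp hV.1 hD.2 hj hjV, ?_⟩
  rw [range_comp]
  exact ((image_mono hjV).trans hDU').trans hU'U

theorem of_mem_maxSet [TotallyDisconnectedSpace E] (hx : CopiesNear F x)
    (hclass : ∃ c, MaxSet F = {y | EndsEquiv F c y}) (hz : z ∈ MaxSet F) : CopiesNear F z := by
  obtain ⟨c, hc⟩ := hclass
  have hxM : x ∈ MaxSet F := fun y _ => hx.endsLE y
  rw [hc] at hxM hz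
  exact (hx.of_endsLE hxM.2).of_endsLE hz.1

/-- Two distinct maximal ends separate two disjoint copies, so inside any copy near `x` there is
one missing `x`. -/
theorem exists_isCopyEmbedding_not_mem [TotallyDisconnectedSpace E] (hx : CopiesNear F x)
    (hclass : ∃ c, MaxSet F = {y | EndsEquiv F c y}) (hM : (MaxSet F).Nontrivial) :
    ∀ U ∈ 𝓝 x, ∃ j, IsCopyEmbedding F j ∧ range j ⊆ U ∧ x ∉ range j := by
  obtain ⟨z₁, hz₁, z₂, hz₂, hne⟩ := hM
  obtain ⟨U₁, U₂, hU₁, hU₂, hz₁U, hz₂U, hU₁₂⟩ := t2_separation hne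
  obtain ⟨j₁, hj₁, h₁⟩ := hx.of_mem_maxSet hclass hz₁ U₁ (hU₁.mem_nhds hz₁U)
  obtain ⟨j₂, hj₂, h₂⟩ := hx.of_mem_maxSet hclass hz₂ U₂ (hU₂.mem_nhds hz₂U)
  intro U hU
  obtain ⟨j, hj, hjU⟩ := hx U hU
  have hsub (k : E → E) : range (j ∘ k) ⊆ U := (range_comp_subset_range k j).trans hjU
  by_cases h₁x : x ∈ range (j ∘ j₁)
  · refine ⟨j ∘ j₂, hj.comp hj₂, hsub j₂, fun h₂x => ?_⟩
    rw [range_comp] at h₁x h₂x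
    exact ((disjoint_image_iff hj.isOpenEmbedding.injective).2 (hU₁₂.mono h₁ h₂)).ne_of_mem
      h₁x h₂x rfl
  · exact ⟨j ∘ j₁, hj.comp hj₁, hsub j₁, h₁x⟩

end CopiesNear

end SelfSimilarity

theorem exists_seq_pairwise_disjoint_tendsto_smallSets {X : Type*} [TopologicalSpace X]
    [FirstCountableTopology X] {p : X} {P : Set X → Prop}
    (h : ∀ U ∈ 𝓝 p, ∃ s, P s ∧ s ⊆ U ∧ IsClosed s ∧ p ∉ s) :
    ∃ s : ℕ → Set X, (∀ n, P (s n)) ∧ Pairwise (Disjoint on s) ∧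
      Tendsto s atTop (𝓝 p).smallSets := by
  obtain ⟨V, hV⟩ := (𝓝 p).exists_antitone_basis
  choose t ht htU htc hpt using fun U : {U // U ∈ 𝓝 p} => h U.1 U.2
  -- `W m` is the neighbourhood of `p` left free after choosing the first `m` sets.
  let W : ℕ → {U // U ∈ 𝓝 p} := fun m => Nat.rec ⟨univ, univ_mem⟩
    (fun m U => ⟨(U.1 ∩ V m) \ t U, sdiff_mem (inter_mem U.2 (hV.mem m))
      ((htc U).isOpen_compl.mem_nhds (hpt U))⟩) m
  have hWanti : Antitone fun m => (W m).1 :=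
    antitone_nat_of_succ_le fun m => sdiff_subset.trans inter_subset_left
  have hWV (m : ℕ) : (W (m + 1)).1 ⊆ V m := sdiff_subset.trans inter_subset_right
  refine ⟨fun m => t (W m), fun m => ht _, (pairwise_disjoint_on _).2 fun m k hmk => ?_, ?_⟩
  · refine disjoint_left.2 fun x hxm hxk => ?_
    exact (hWanti hmk (htU (W k) hxk)).2 hxm
  · refine (tendsto_add_atTop_iff_nat 1).1 (hV.tendsto_smallSets.smallSets_mono ?_)
    exact Eventually.of_forall fun m => (htU _).trans (hWV m)

structure CopyBlocks {E : Type*} [TopologicalSpace E] (F : Set E) (ι : Type*) where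
  copy : ι → E → E
  isCopyEmbedding : ∀ i, IsCopyEmbedding F (copy i)
  pairwise_disjoint : Pairwise (Disjoint on fun i => range (copy i))
  limit : E
  tendsto_smallSets : Tendsto (fun i => range (copy i)) cofinite (𝓝 limit).smallSets

theorem SelfSimilarPair.nonempty_copyBlocks {E : Type*} [TopologicalSpace E] [CompactSpace E]
    [T2Space E] [TotallyDisconnectedSpace E] [FirstCountableTopology E] {F : Set E}
    (hss : SelfSimilarPair F) (hclass : ∃ c, MaxSet F = {y | EndsEquiv F c y})
    (hM : (MaxSet F).Nontrivial) : Nonempty (CopyBlocks F ℤ) := by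
  obtain ⟨x, hx⟩ := hss.exists_copiesNear
  obtain ⟨s, hs, hdisj, hlim⟩ := exists_seq_pairwise_disjoint_tendsto_smallSets
    (P := fun s => ∃ j, IsCopyEmbedding F j ∧ range j = s) fun U hU => by
      obtain ⟨j, hj, hjU, hxj⟩ := hx.exists_isCopyEmbedding_not_mem hclass hM U hU
      exact ⟨range j, ⟨j, hj, rfl⟩, hjU, hj.isClopen_range.1, hxj⟩
  choose j hj hjs using hs
  let e := Equiv.intEquivNat
  refine ⟨⟨fun n => j (e n), fun n => hj (e n), ?_, x, ?_⟩⟩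
  · simpa only [hjs] using hdisj.comp_of_injective e.injective
  · rw [← Nat.cofinite_eq_atTop] at hlim
    simpa only [comp_def, hjs] using hlim.comp e.injective.tendsto_cofinite

namespace CopyBlocks

variable {E : Type*} [TopologicalSpace E] {F : Set E} {ι : Type*} (B : CopyBlocks F ι)

theorem injective_uncurry : Injective fun q : ι × E => B.copy q.1 q.2 := by
  rintro ⟨i, x⟩ ⟨k, y⟩ h
  obtain rfl : i = k := by
    by_contra hik
    exact (B.pairwise_disjoint hik).ne_of_mem (mem_range_self x) (mem_range_self y) h
  exact Prod.ext rfl ((B.isCopyEmbedding i).isOpenEmbedding.injective h)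

open Classical in
noncomputable def perm : Equiv.Perm ι →* Equiv.Perm E where
  toFun σ := Equiv.Perm.extendDomain (σ.prodCongr (Equiv.refl E))
    (Equiv.ofInjective _ B.injective_uncurry)
  map_one' := Equiv.Perm.extendDomain_one _
  map_mul' σ ρ := by rw [Equiv.Perm.extendDomain_mul]; rfl

theorem perm_apply_apply (σ : Equiv.Perm ι) (i : ι) (x : E) :
    B.perm σ (B.copy i x) = B.copy (σ i) x := by
  classical exact Equiv.Perm.extendDomain_apply_image _ _ (i, x)

theorem perm_apply_of_forall_not_mem {σ : Equiv.Perm ι} {x : E}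
    (hx : ∀ i, x ∉ range (B.copy i)) : B.perm σ x = x := by
  classical
  exact Equiv.Perm.extendDomain_apply_not_subtype _ _ fun ⟨⟨i, y⟩, hy⟩ => hx i ⟨y, hy⟩

theorem perm_comp_copy (σ : Equiv.Perm ι) (i : ι) : B.perm σ ∘ B.copy i = B.copy (σ i) :=
  funext (B.perm_apply_apply σ i)

theorem image_perm_range (σ : Equiv.Perm ι) (i : ι) :
    B.perm σ '' range (B.copy i) = range (B.copy (σ i)) := by
  rw [← range_comp, perm_comp_copy]

theorem perm_apply_mem_iff (σ : Equiv.Perm ι) (x : E) : B.perm σ x ∈ F ↔ x ∈ F := by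
  by_cases hx : ∃ i, x ∈ range (B.copy i)
  · obtain ⟨i, y, rfl⟩ := hx
    rw [perm_apply_apply, (B.isCopyEmbedding _).mem_iff, (B.isCopyEmbedding _).mem_iff]
  · rw [not_exists] at hx
    rw [B.perm_apply_of_forall_not_mem hx]

theorem isHTranslation_range_perm {σ : Equiv.Perm ι} {i : ι}
    (hσ : Injective fun m : ℤ => (σ ^ m) i) :
    IsHTranslation (range (B.copy i)) (B.perm σ) := by
  intro m n hmn
  simp only [← map_zpow, image_perm_range]
  exact B.pairwise_disjoint (hσ.ne hmn)

variable [CompactSpace E] [T2Space E]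

theorem isHalfSpace_range {z : E} (hz : z ∈ MaxSet F) {i k : ι} (hik : i ≠ k) :
    IsHalfSpace F (range (B.copy i)) := by
  refine ⟨(B.isCopyEmbedding i).isClopen_range,
    ⟨B.copy i z, mem_range_self z, (B.isCopyEmbedding i).maximalEnd_apply hz⟩,
    (ssubset_iff_of_subset inter_subset_right).2
      ⟨B.copy k z, (B.isCopyEmbedding k).maximalEnd_apply hz, fun h => ?_⟩⟩
  exact (B.pairwise_disjoint hik).ne_of_mem h.1 (mem_range_self z) rfl

/-- The finitely many exceptional blocks are closed and miss `x`, so they can be cut out of a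
neighbourhood of `x`. -/
theorem preimage_perm_mem_nhds {σ : Equiv.Perm ι} {x : E} (hx : ∀ i, x ∉ range (B.copy i))
    {U G : Set E} (hU : U ∈ 𝓝 x) (hG : G ∈ 𝓝 x)
    (hev : ∀ᶠ i in cofinite, ∀ y ∈ G ∩ range (B.copy i), B.perm σ y ∈ U) :
    B.perm σ ⁻¹' U ∈ 𝓝 x := by
  rw [eventually_cofinite] at hev
  set S := {i | ¬∀ y ∈ G ∩ range (B.copy i), B.perm σ y ∈ U}
  have hN : IsClosed (⋃ i ∈ S, range (B.copy i)) :=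
    hev.isClosed_biUnion fun i _ => (B.isCopyEmbedding i).isClopen_range.1
  have hxN : x ∉ ⋃ i ∈ S, range (B.copy i) := by
    simp only [mem_iUnion, not_exists]
    exact fun i _ => hx i
  refine mem_of_superset (inter_mem (inter_mem hU hG) (hN.isOpen_compl.mem_nhds hxN)) ?_
  rintro y ⟨⟨hyU, hyG⟩, hyN⟩
  by_cases hy : ∃ i, y ∈ range (B.copy i)
  · obtain ⟨i, hyi⟩ := hy
    have hi : i ∉ S := fun hi => hyN (mem_iUnion₂.2 ⟨i, hi, hyi⟩)
    exact (not_not.1 hi) y ⟨hyG, hyi⟩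
  · rw [not_exists] at hy
    rw [mem_preimage, B.perm_apply_of_forall_not_mem hy]
    exact hyU

theorem continuousAt_perm_of_forall_not_mem (σ : Equiv.Perm ι) {x : E}
    (hx : ∀ i, x ∉ range (B.copy i)) : ContinuousAt (B.perm σ) x := by
  rw [ContinuousAt, B.perm_apply_of_forall_not_mem hx]
  intro U hU
  have hlim := tendsto_smallSets_iff.1 B.tendsto_smallSets
  rcases eq_or_ne x B.limit with rfl | hxp
  · refine B.preimage_perm_mem_nhds hx hU univ_mem ?_
    filter_upwards [σ.injective.tendsto_cofinite.eventually (hlim U hU)] with i hi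
    rintro _ ⟨-, y, rfl⟩
    rw [perm_apply_apply]
    exact hi (mem_range_self y)
  · obtain ⟨G, G', hG, hG', hxG, hpG', hGG'⟩ := t2_separation hxp
    refine B.preimage_perm_mem_nhds hx hU (hG.mem_nhds hxG) ?_
    filter_upwards [hlim G' (hG'.mem_nhds hpG')] with i hi
    rintro y ⟨hyG, hy⟩
    exact absurd (hi hy) (disjoint_left.1 hGG' hyG)

theorem continuous_perm (σ : Equiv.Perm ι) : Continuous (B.perm σ) := by
  refine continuous_iff_continuousAt.2 fun x => ?_
  by_cases hx : ∃ i, x ∈ range (B.copy i)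
  · obtain ⟨i, y, rfl⟩ := hx
    rw [← (B.isCopyEmbedding i).isOpenEmbedding.continuousAt_iff, perm_comp_copy]
    exact (B.isCopyEmbedding (σ i)).isOpenEmbedding.continuous.continuousAt
  · rw [not_exists] at hx
    exact B.continuousAt_perm_of_forall_not_mem σ hx

theorem perm_mem_endsHomeo (σ : Equiv.Perm ι) : B.perm σ ∈ EndsHomeo F := by
  refine ⟨B.continuous_perm σ, ?_, B.perm_apply_mem_iff σ⟩
  rw [← Equiv.Perm.inv_def, ← map_inv]
  exact B.continuous_perm σ⁻¹

noncomputable def homeoPerm : Equiv.Perm ι →* EndsHomeo F :=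
  B.perm.codRestrict _ B.perm_mem_endsHomeo

theorem homeoPerm_injective [Nonempty E] : Injective B.homeoPerm := by
  refine (injective_iff_map_eq_one _).2 fun σ hσ => Equiv.ext fun i => ?_
  obtain ⟨x⟩ := ‹Nonempty E›
  by_contra hne
  refine (B.pairwise_disjoint hne).ne_of_mem (mem_range_self x) (mem_range_self x) ?_
  rw [← perm_apply_apply, show B.perm σ = 1 from congrArg Subtype.val hσ]
  rfl

end CopyBlocks

theorem Equiv.neg_sq {G : Type*} [InvolutiveNeg G] : Equiv.neg G ^ 2 = 1 :=
  Equiv.ext neg_neg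

theorem Equiv.addRight_mul_neg_mul_inv_mul_neg {G : Type*} [AddCommGroup G] (a : G) :
    Equiv.addRight a * Equiv.neg G * (Equiv.addRight a)⁻¹ * Equiv.neg G =
      Equiv.addRight (a + a) := by
  ext x
  simp only [Equiv.Perm.mul_apply, Equiv.neg_apply, Equiv.coe_addRight,
    Equiv.neg_addRight]
  abel

variable {E : Type*} [TopologicalSpace E] [Nonempty E] [CompactSpace E]
  [TopologicalSpace.MetrizableSpace E] [TotallyDisconnectedSpace E]

theorem exists_translation_product_of_two_conjugate_involutions_general
    (F : Set E) (huss : UniformlySelfSimilar F) :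
    ∃ H : Set E, IsHalfSpace F H ∧ ∃ τ g : ↥(EndsHomeo F), τ ^ 2 = 1 ∧ τ ≠ 1 ∧
      IsHTranslation H ((g * τ * g⁻¹ * τ : ↥(EndsHomeo F)) : Equiv.Perm E) := by
  obtain ⟨hss, hclass, ⟨e⟩⟩ := huss
  have hM : (MaxSet F).Nontrivial := nontrivial_coe_sort.1 e.symm.injective.nontrivial
  obtain ⟨B⟩ := hss.nonempty_copyBlocks hclass hM
  obtain ⟨z, hz⟩ := hM.nonempty
  refine ⟨range (B.copy 0), B.isHalfSpace_range hz zero_ne_one, B.homeoPerm (Equiv.neg ℤ),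
    B.homeoPerm (Equiv.addRight 1), ?_, ?_, ?_⟩
  · rw [← map_pow, Equiv.neg_sq, map_one]
  · refine (map_ne_one_iff _ B.homeoPerm_injective).2 fun h => ?_
    simpa using Equiv.ext_iff.1 h 1
  · rw [← map_inv, ← map_mul, ← map_mul, ← map_mul, Equiv.addRight_mul_neg_mul_inv_mul_neg]
    refine B.isHTranslation_range_perm fun m n hmn => ?_
    simpa using hmn

theorem exists_translation_product_of_two_conjugate_involutions
    (F : Set E) (hF : IsClosed F) (huss : UniformlySelfSimilar F) :
    ∃ H : Set E, IsHalfSpace F H ∧ ∃ τ g : ↥(EndsHomeo F), τ ^ 2 = 1 ∧ τ ≠ 1 ∧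
      IsHTranslation H ((g * τ * g⁻¹ * τ : ↥(EndsHomeo F)) : Equiv.Perm E) :=
  exists_translation_product_of_two_conjugate_involutions_general F huss
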